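/- arXiv:2405.10050 — 3 statements merged into one kernel-verified Lean document; each statement's English description precedes it below -/
import Mathlib

section
/- Let r, x0 ∈ ℝ^d and let u ∈ ℝ^d be a unit vector. For any point x with ⟨u, x - x0⟩ ≠ 0 define t(x) = (‖r - x‖² - ‖r - x0‖²) / (2⟨u, x - x0⟩). Suppose x arises in an iteration of the incircle RayCast, producing the candidate vertex r' = r + t(x)·u, and suppose x' is a point with ⟨u, x' - x0⟩ > 0 that is strictly closer to the candidate than the known generator, i.e. ‖r' - x'‖ < ‖r' - x0‖. Then t(x') < t(x). -/
/-- Monotone decrease of the ray parameter in the incircle RayCast iteration: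
if the candidate vertex `r' = r + t(x) • u` is strictly closer to a new point `x'`
(in the correct half-space) than to the known generator `x0`, then `t(x') < t(x)`. -/
theorem raycast_parameter_decreases (d : ℕ) (r x0 u : EuclideanSpace ℝ (Fin d))
    (hu : ‖u‖ = 1) (x x' : EuclideanSpace ℝ (Fin d))
    (t : EuclideanSpace ℝ (Fin d) → ℝ)
    (ht : ∀ z, t z = (‖r - z‖ ^ 2 - ‖r - x0‖ ^ 2) / (2 * (inner ℝ u (z - x0) : ℝ)))
    (hx : (inner ℝ u (x - x0) : ℝ) ≠ 0)
    (hx' : 0 < (inner ℝ u (x' - x0) : ℝ))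
    (hclose : ‖(r + t x • u) - x'‖ < ‖(r + t x • u) - x0‖) :
    t x' < t x := by
  set s := t x with hs
  set c : ℝ := inner ℝ u (x' - x0) with hc
  have hdiff : ‖(r + s • u) - x'‖ ^ 2 - ‖(r + s • u) - x0‖ ^ 2
      = (‖r - x'‖ ^ 2 - ‖r - x0‖ ^ 2) - 2 * s * c := by
    have e : ∀ a b : EuclideanSpace ℝ (Fin d),
        ‖a - b‖ ^ 2 = ‖a‖ ^ 2 - 2 * (inner ℝ a b : ℝ) + ‖b‖ ^ 2 := fun a b => by
      rw [norm_sub_sq_real]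
    simp only [e, norm_add_sq_real, inner_add_left, real_inner_smul_left, hc,
      inner_sub_right]
    ring
  have hsq : ‖(r + s • u) - x'‖ ^ 2 < ‖(r + s • u) - x0‖ ^ 2 := by
    exact pow_lt_pow_left₀ hclose (norm_nonneg _) (by norm_num)
  have hlt : ‖r - x'‖ ^ 2 - ‖r - x0‖ ^ 2 < 2 * s * c := by linarith
  rw [ht x', ← hc]
  rw [div_lt_iff₀ (by positivity)]
  linear_combination hlt
end

section
/- Let X = {x_1, …, x_N} be a finite set of points in ℝ^d, and for each i let C_i = {z ∈ ℝ^d : ∀ j, dist(z, x_i) ≤ dist(z, x_j)} be the Voronoi cell of x_i. Suppose σ ⊆ {1, …, N} has exactly d + 1 elements, the points {x_i : i ∈ σ} are affinely independent, there is a point v ∈ ℝ^d and ρ > 0 with dist(v, x_i) = ρ for all i ∈ σ, and dist(v, x_j) > ρ for all j ∉ σ. Then ⋂_{i ∈ σ} C_i = {v}; in particular v is a vertex of the Voronoi diagram. -/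
/-- Incircle criterion: if `v` is at common distance `ρ` from the `d + 1` affinely
independent generators `X i`, `i ∈ σ`, and strictly farther from every other node,
then the intersection of the corresponding Voronoi cells is exactly `{v}`,
i.e. `v` is a vertex of the Voronoi diagram. -/
theorem voronoi_vertex_of_incircle (d N : ℕ)
    (X : Fin N → EuclideanSpace ℝ (Fin d))
    (C : Fin N → Set (EuclideanSpace ℝ (Fin d)))
    (hC : ∀ i, C i = {z | ∀ j, dist z (X i) ≤ dist z (X j)})
    (σ : Finset (Fin N)) (hcard : σ.card = d + 1)
    (hind : AffineIndependent ℝ (fun i : σ => X i))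
    (v : EuclideanSpace ℝ (Fin d)) (ρ : ℝ) (hρ : 0 < ρ)
    (heq : ∀ i ∈ σ, dist v (X i) = ρ)
    (hgt : ∀ j ∉ σ, ρ < dist v (X j)) :
    (⋂ i ∈ σ, C i) = {v} := by
  -- nonempty σ
  have hne : σ.Nonempty := Finset.card_pos.mp (by omega)
  obtain ⟨i₀, hi₀⟩ := hne
  -- build a simplex indexed by Fin (d+1)
  have hcard' : Fintype.card σ = d + 1 := by simp [hcard]
  let e : Fin (d + 1) ≃ σ := (Fintype.equivFinOfCardEq hcard').symm
  have hind' : AffineIndependent ℝ (fun k : Fin (d + 1) => X (e k)) :=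
    hind.comp_embedding e.toEmbedding
  let s : Affine.Simplex ℝ (EuclideanSpace ℝ (Fin d)) d := ⟨fun k => X (e k), hind'⟩
  have hspan : affineSpan ℝ (Set.range s.points) = ⊤ := by
    rw [hind'.affineSpan_eq_top_iff_card_eq_finrank_add_one]
    simp [finrank_euclideanSpace]
  have hv : v = s.circumcenter := by
    refine s.eq_circumcenter_of_dist_eq (by rw [hspan]; trivial) (r := ρ) fun k => ?_
    rw [dist_comm]; exact heq _ (e k).2
  ext z
  simp only [Set.mem_iInter, Set.mem_singleton_iff]
  constructor
  · intro hz
    have hz' : ∀ i ∈ σ, ∀ j, dist z (X i) ≤ dist z (X j) := by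
      intro i hi j
      have := hz i hi
      rw [hC i] at this
      exact this j
    -- all distances from z to σ-points equal
    have hzeq : ∀ i ∈ σ, dist z (X i) = dist z (X i₀) :=
      fun i hi => le_antisymm (hz' i hi i₀) (hz' i₀ hi₀ i)
    have hz2 : z = s.circumcenter := by
      refine s.eq_circumcenter_of_dist_eq (by rw [hspan]; trivial)
        (r := dist z (X i₀)) fun k => ?_
      rw [dist_comm]; exact hzeq _ (e k).2
    rw [hz2, hv]
  · rintro rfl i hi
    rw [hC i]
    intro j
    rw [heq i hi]
    by_cases hj : j ∈ σ
    · rw [heq j hj]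
    · exact (hgt j hj).le
end

section
/- Let d ≥ 2, let B̃ ⊂ ℝ^{d-1} be a measurable set of finite Lebesgue measure, let f̃ : B̃ → ℝ be integrable, and let f_0 ∈ ℝ. Identify ℝ^d = ℝ^{d-1} × ℝ, set x_0 = (0, 1), and let C = {((1-s)·b, s) : b ∈ B̃, s ∈ [0, 1]} be the cone with base B̃ × {0} and apex x_0. Define f : C → ℝ by radial linear interpolation, f((1-s)·b, s) = (1-s)·f̃(b) + s·f_0 for s < 1 and f(x_0) = f_0. Then ∫_C f(x) dx = (1/d)·( (d/(d+1))·∫_{B̃} f̃(x̃) dx̃ + (1/(d+1))·|B̃|·f_0 ), where |B̃| is the (d-1)-dimensional Lebesgue measure of B̃. Equivalently, in parametrized form, ∫_0^1 ∫_{B̃} ((1-s)·f̃(b) + s·f_0)·(1-s)^{d-1} db ds equals the same right-hand side. -/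
open MeasureTheory Set

private lemma cone_aux_pow_int (k : ℕ) :
    ∫ s in (0:ℝ)..1, (1 - s) ^ k = 1 / (k + 1) := by
  have h := intervalIntegral.integral_comp_sub_left (a := (0:ℝ)) (b := 1)
    (fun x : ℝ => x ^ k) 1
  simp only [sub_zero, sub_self] at h
  rw [h, integral_pow]
  ring

private lemma cone_aux_one_dim (n : ℕ) (I K : ℝ) :
    (∫ s in Set.Icc (0:ℝ) 1, ((1 - s) ^ (n + 1) * I + s * (1 - s) ^ n * K))
      = I / (n + 2) + K / ((n + 1) * (n + 2)) := by
  rw [MeasureTheory.integral_Icc_eq_integral_Ioc,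
    ← intervalIntegral.integral_of_le zero_le_one]
  have c1 : Continuous fun s : ℝ => (1 - s) ^ (n + 1) * I := by fun_prop
  have c2 : Continuous fun s : ℝ => s * (1 - s) ^ n * K := by fun_prop
  rw [intervalIntegral.integral_add (c1.intervalIntegrable _ _)
    (c2.intervalIntegrable _ _)]
  have h2 : (∫ s in (0:ℝ)..1, s * (1 - s) ^ n * K)
      = (1 / ((n:ℝ) + 1) - 1 / ((n:ℝ) + 2)) * K := by
    have hptw : ∀ s : ℝ, s * (1 - s) ^ n * K = (1 - s) ^ n * K - (1 - s) ^ (n + 1) * K := by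
      intro s; ring
    simp only [hptw]
    rw [intervalIntegral.integral_sub
      ((Continuous.intervalIntegrable (by fun_prop) _ _))
      ((Continuous.intervalIntegrable (by fun_prop) _ _)),
      intervalIntegral.integral_mul_const, intervalIntegral.integral_mul_const,
      cone_aux_pow_int, cone_aux_pow_int]
    push_cast
    ring
  rw [intervalIntegral.integral_mul_const, cone_aux_pow_int, h2]
  have hn1 : ((n:ℝ) + 1) ≠ 0 := by positivity
  have hn2 : ((n:ℝ) + 2) ≠ 0 := by positivity
  push_cast
  field_simp
  ring

/-- Integral of a radially linearly interpolated function over a cone in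
`ℝ^d = ℝ^{d-1} × ℝ` with base `B̃ × {0}` and apex `x₀ = (0, 1)`:
`∫_C f = (1/d) ((d/(d+1)) ∫_{B̃} f̃ + (1/(d+1)) |B̃| f₀)`, and the same value in
the parametrized form `∫_0^1 ∫_{B̃} ((1-s) f̃(b) + s f₀) (1-s)^{d-1} db ds`. -/
theorem cone_integral_linear_interpolation (d : ℕ) (hd : 2 ≤ d)
    (B : Set (Fin (d - 1) → ℝ)) (hB : MeasurableSet B) (hBfin : volume B ≠ ⊤)
    (ftil : (Fin (d - 1) → ℝ) → ℝ) (hft : IntegrableOn ftil B) (f0 : ℝ)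
    (C : Set ((Fin (d - 1) → ℝ) × ℝ))
    (hC : C = (fun p : (Fin (d - 1) → ℝ) × ℝ => ((1 - p.2) • p.1, p.2)) ''
        (B ×ˢ Set.Icc (0 : ℝ) 1))
    (f : (Fin (d - 1) → ℝ) × ℝ → ℝ)
    (hf : ∀ b ∈ B, ∀ s ∈ Set.Ico (0 : ℝ) 1,
        f ((1 - s) • b, s) = (1 - s) * ftil b + s * f0)
    (hf1 : f (0, 1) = f0) :
    (∫ z in C, f z)
      = (1 / (d : ℝ)) * (((d : ℝ) / ((d : ℝ) + 1)) * (∫ b in B, ftil b)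
          + (1 / ((d : ℝ) + 1)) * (volume B).toReal * f0) ∧
    (∫ s in Set.Icc (0 : ℝ) 1, ∫ b in B, ((1 - s) * ftil b + s * f0) * (1 - s) ^ (d - 1))
      = (1 / (d : ℝ)) * (((d : ℝ) / ((d : ℝ) + 1)) * (∫ b in B, ftil b)
          + (1 / ((d : ℝ) + 1)) * (volume B).toReal * f0) := by
  obtain ⟨n, rfl⟩ : ∃ n, d = n + 1 := ⟨d - 1, by omega⟩
  have hn : 1 ≤ n := by omega
  set V : ℝ := (volume B).toReal with hV
  set I : ℝ := ∫ b in B, ftil b with hI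
  have hfinrank : Module.finrank ℝ (Fin (n + 1 - 1) → ℝ) = n := by
    simp [Module.finrank_fin_fun]
  -- The common right hand side
  have hRHS : (1 / ((n+1 : ℕ) : ℝ)) * ((((n+1 : ℕ) : ℝ) / (((n+1 : ℕ) : ℝ) + 1)) * I
      + (1 / (((n+1 : ℕ) : ℝ) + 1)) * V * f0)
      = I / ((n:ℝ) + 2) + (V * f0) / (((n:ℝ) + 1) * ((n:ℝ) + 2)) := by
    have hn1 : ((n:ℝ) + 1) ≠ 0 := by positivity
    have hn2 : ((n:ℝ) + 2) ≠ 0 := by positivity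
    push_cast
    field_simp
    ring
  -- basic integrability on B
  have hconstInt : ∀ c : ℝ, IntegrableOn (fun _ : Fin (n + 1 - 1) → ℝ => c) B :=
    fun c => integrableOn_const hBfin
  -- Part 2 (parametrized form)
  have hpart2 : (∫ s in Set.Icc (0 : ℝ) 1,
      ∫ b in B, ((1 - s) * ftil b + s * f0) * (1 - s) ^ (n + 1 - 1))
      = I / ((n:ℝ) + 2) + (V * f0) / (((n:ℝ) + 1) * ((n:ℝ) + 2)) := by
    have hinner : ∀ s : ℝ,
        (∫ b in B, ((1 - s) * ftil b + s * f0) * (1 - s) ^ (n + 1 - 1))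
          = (1 - s) ^ (n + 1) * I + s * (1 - s) ^ n * (V * f0) := by
      intro s
      show (∫ b in B, ((1 - s) * ftil b + s * f0) * (1 - s) ^ n)
          = (1 - s) ^ (n + 1) * I + s * (1 - s) ^ n * (V * f0)
      rw [integral_mul_const, integral_add (hft.const_mul _) (hconstInt (s * f0)),
        integral_const_mul, setIntegral_const]
      simp only [smul_eq_mul, measureReal_def, ← hV, ← hI]
      ring
    calc (∫ s in Set.Icc (0 : ℝ) 1,
        ∫ b in B, ((1 - s) * ftil b + s * f0) * (1 - s) ^ (n + 1 - 1))
        = ∫ s in Set.Icc (0 : ℝ) 1,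
            ((1 - s) ^ (n + 1) * I + s * (1 - s) ^ n * (V * f0)) := by
          exact integral_congr_ae (Filter.Eventually.of_forall fun s => hinner s)
      _ = I / ((n:ℝ) + 2) + (V * f0) / (((n:ℝ) + 1) * ((n:ℝ) + 2)) :=
          cone_aux_one_dim n I (V * f0)
  -- measurable representative of ftil
  have hsm := hft.aestronglyMeasurable
  set g : (Fin (n + 1 - 1) → ℝ) → ℝ := hsm.mk ftil with hg
  have hgm : StronglyMeasurable g := hsm.stronglyMeasurable_mk
  have hgae : ftil =ᵐ[volume.restrict B] g := hsm.ae_eq_mk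
  have hgB : IntegrableOn g B := hft.congr hgae
  have hIg : (∫ b in B, g b) = I := (integral_congr_ae hgae).symm
  have hgconstInt : ∀ s : ℝ,
      IntegrableOn (fun x => (1 - s) * g x + s * f0) B :=
    fun s => (hgB.const_mul _).add (hconstInt (s * f0))
  have hN0 : volume ({x | ftil x ≠ g x} ∩ B) = 0 := by
    have h := hgae
    rw [Filter.EventuallyEq, ae_iff, Measure.restrict_apply' hB] at h
    exact h
  set N : Set (Fin (n + 1 - 1) → ℝ) := toMeasurable volume ({x | ftil x ≠ g x} ∩ B)
    with hNdef
  have hNmeas : MeasurableSet N := measurableSet_toMeasurable _ _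
  have hNnull : volume N = 0 := by rw [hNdef, measure_toMeasurable]; exact hN0
  have hNsub : {x | ftil x ≠ g x} ∩ B ⊆ N := subset_toMeasurable _ _
  -- the cone minus apex
  set C' : Set ((Fin (n + 1 - 1) → ℝ) × ℝ) :=
    (fun p : (Fin (n + 1 - 1) → ℝ) × ℝ => ((1 - p.2) • p.1, p.2)) ''
      (B ×ˢ Set.Ico (0 : ℝ) 1) with hC'
  have hC'eq : C' = {q : (Fin (n + 1 - 1) → ℝ) × ℝ |
      q.2 ∈ Set.Ico (0 : ℝ) 1 ∧ (1 - q.2)⁻¹ • q.1 ∈ B} := by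
    ext ⟨y, s⟩
    constructor
    · rintro ⟨⟨b, t⟩, ⟨hb, ht⟩, heq⟩
      obtain ⟨h1, h2⟩ := Prod.mk.injEq .. ▸ heq
      have h1t : (1 : ℝ) - t ≠ 0 := sub_ne_zero.2 (ne_of_gt ht.2)
      subst h2
      refine ⟨ht, ?_⟩
      rw [← h1, smul_smul, inv_mul_cancel₀ h1t, one_smul]
      exact hb
    · rintro ⟨hs, hy⟩
      have h1s : (1 : ℝ) - s ≠ 0 := sub_ne_zero.2 (ne_of_gt hs.2)
      refine ⟨((1 - s)⁻¹ • y, s), ⟨hy, hs⟩, ?_⟩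
      simp only [smul_smul, mul_inv_cancel₀ h1s, one_smul]
  have hsmulMeas : Measurable fun q : (Fin (n + 1 - 1) → ℝ) × ℝ =>
      (1 - q.2)⁻¹ • q.1 := by
    apply measurable_pi_lambda
    intro i
    exact ((measurable_const.sub measurable_snd).inv).mul
      ((measurable_pi_apply i).comp measurable_fst)
  have hC'meas : MeasurableSet C' := by
    rw [hC'eq]
    exact (measurable_snd measurableSet_Ico).inter (hsmulMeas hB)
  -- the good integrand
  set G : (Fin (n + 1 - 1) → ℝ) × ℝ → ℝ :=
    fun q => (1 - q.2) * g ((1 - q.2)⁻¹ • q.1) + q.2 * f0 with hG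
  have hGsm : StronglyMeasurable G := by
    apply Measurable.stronglyMeasurable
    exact ((measurable_const.sub measurable_snd).mul
      (hgm.measurable.comp hsmulMeas)).add (measurable_snd.mul measurable_const)
  set H : (Fin (n + 1 - 1) → ℝ) × ℝ → ℝ := C'.indicator G with hH
  have hHsm : StronglyMeasurable H := hGsm.indicator hC'meas
  -- the bad set is null
  set D : Set ((Fin (n + 1 - 1) → ℝ) × ℝ) :=
    {q | q.2 ∈ Set.Ico (0 : ℝ) 1 ∧ (1 - q.2)⁻¹ • q.1 ∈ N} with hD
  have hDmeas : MeasurableSet D :=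
    (measurable_snd measurableSet_Ico).inter (hsmulMeas hNmeas)
  have hDnull : volume D = 0 := by
    rw [Measure.volume_eq_prod, Measure.prod_apply_symm hDmeas]
    have hslices : ∀ s : ℝ,
        volume ((fun y : Fin (n + 1 - 1) → ℝ => (y, s)) ⁻¹' D) = 0 := by
      intro s
      by_cases hs : s ∈ Set.Ico (0 : ℝ) 1
      · have h1s : (1 : ℝ) - s ≠ 0 := sub_ne_zero.2 (ne_of_gt hs.2)
        have hpre : ((fun y : Fin (n + 1 - 1) → ℝ => (y, s)) ⁻¹' D)
            = ((1 - s)⁻¹ • ·) ⁻¹' N := by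
          ext y
          simp only [hD, Set.mem_preimage, Set.mem_setOf_eq, hs, true_and]
        rw [hpre, Measure.addHaar_preimage_smul volume (inv_ne_zero h1s), hNnull,
          mul_zero]
      · have hpre : ((fun y : Fin (n + 1 - 1) → ℝ => (y, s)) ⁻¹' D) = ∅ := by
          ext y
          simp only [hD, Set.mem_preimage, Set.mem_setOf_eq, hs, false_and,
            Set.mem_empty_iff_false]
        rw [hpre, measure_empty]
    simp only [hslices, lintegral_zero]
  -- the indicator functions agree off D
  have hFH : C'.indicator f =ᵐ[volume] H := by
    rw [Filter.EventuallyEq, ae_iff]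
    refine measure_mono_null ?_ hDnull
    intro q hq
    by_contra hqD
    apply hq
    show C'.indicator f q = H q
    by_cases hqC : q ∈ C'
    · rw [Set.indicator_of_mem hqC, hH, Set.indicator_of_mem hqC, hG]
      have hqC2 := hqC
      rw [hC'eq] at hqC2
      obtain ⟨hs, hb⟩ := hqC2
      have h1s : (1 : ℝ) - q.2 ≠ 0 := sub_ne_zero.2 (ne_of_gt hs.2)
      have hq1 : ((1 - q.2) • ((1 - q.2)⁻¹ • q.1), q.2) = q := by
        rw [smul_smul, mul_inv_cancel₀ h1s, one_smul]
      have hfq := hf _ hb _ hs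
      rw [hq1] at hfq
      rw [hfq]
      have hgb : ftil ((1 - q.2)⁻¹ • q.1) = g ((1 - q.2)⁻¹ • q.1) := by
        by_contra hne
        exact hqD ⟨hs, hNsub ⟨hne, hb⟩⟩
      rw [hgb]
    · rw [Set.indicator_of_notMem hqC, hH, Set.indicator_of_notMem hqC]
  -- slices of H
  have hslice : ∀ s ∈ Set.Ico (0 : ℝ) 1, (fun y : Fin (n + 1 - 1) → ℝ => H (y, s))
      = fun y => (B.indicator fun x => (1 - s) * g x + s * f0) ((1 - s)⁻¹ • y) := by
    intro s hs
    funext y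
    by_cases hyB : (1 - s)⁻¹ • y ∈ B
    · rw [hH, Set.indicator_of_mem (by rw [hC'eq]; exact ⟨hs, hyB⟩),
        Set.indicator_of_mem hyB]
    · rw [hH, Set.indicator_of_notMem (by rw [hC'eq]; rintro ⟨_, h⟩; exact hyB h),
        Set.indicator_of_notMem hyB]
  have hslice0 : ∀ s : ℝ, s ∉ Set.Ico (0 : ℝ) 1 →
      (fun y : Fin (n + 1 - 1) → ℝ => H (y, s)) = 0 := by
    intro s hs
    funext y
    rw [hH, Set.indicator_of_notMem (by rw [hC'eq]; rintro ⟨h1, _⟩; exact hs h1)]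
    rfl
  -- slices are integrable
  have hsliceInt : ∀ s : ℝ, Integrable (fun y : Fin (n + 1 - 1) → ℝ => H (y, s)) := by
    intro s
    by_cases hs : s ∈ Set.Ico (0 : ℝ) 1
    · rw [hslice s hs]
      have h1s : (1 : ℝ) - s ≠ 0 := sub_ne_zero.2 (ne_of_gt hs.2)
      exact (integrable_comp_smul_iff volume _ (inv_ne_zero h1s)).2
        ((integrable_indicator_iff hB).2 (hgconstInt s))
    · rw [hslice0 s hs]
      exact integrable_zero _ _ _
  -- value of the slices
  have hsliceVal : ∀ s ∈ Set.Ico (0 : ℝ) 1,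
      (∫ y : Fin (n + 1 - 1) → ℝ, H (y, s))
        = (1 - s) ^ (n + 1) * I + s * (1 - s) ^ n * (V * f0) := by
    intro s hs
    have h1s0 : (0 : ℝ) ≤ 1 - s := by linarith [hs.2]
    rw [hslice s hs,
      Measure.integral_comp_inv_smul_of_nonneg volume
        (B.indicator fun x => (1 - s) * g x + s * f0) h1s0,
      integral_indicator hB,
      integral_add (hgB.const_mul _) (hconstInt (s * f0)),
      integral_const_mul, setIntegral_const, hIg, hfinrank]
    simp only [smul_eq_mul, measureReal_def, ← hV]
    ring
  -- norm of the slices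
  have hsliceNorm : ∀ s ∈ Set.Ico (0 : ℝ) 1,
      (∫ y : Fin (n + 1 - 1) → ℝ, ‖H (y, s)‖)
        = (1 - s) ^ n * ∫ x in B, ‖(1 - s) * g x + s * f0‖ := by
    intro s hs
    have h1s0 : (0 : ℝ) ≤ 1 - s := by linarith [hs.2]
    have hnorm : (fun y : Fin (n + 1 - 1) → ℝ => ‖H (y, s)‖)
        = fun y => (B.indicator fun x => ‖(1 - s) * g x + s * f0‖) ((1 - s)⁻¹ • y) := by
      funext y
      rw [congrFun (hslice s hs) y, norm_indicator_eq_indicator_norm]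
    rw [hnorm,
      Measure.integral_comp_inv_smul_of_nonneg volume
        (B.indicator fun x => ‖(1 - s) * g x + s * f0‖) h1s0,
      integral_indicator hB, hfinrank, smul_eq_mul]
  -- bound for the norms
  set M : ℝ := ∫ x in B, (‖g x‖ + |f0|) with hM
  have hMint : IntegrableOn (fun x => ‖g x‖ + |f0|) B :=
    hgB.norm.add (hconstInt |f0|)
  have hM0 : 0 ≤ M :=
    integral_nonneg fun x => add_nonneg (norm_nonneg _) (abs_nonneg _)
  have hbound : ∀ s : ℝ,
      ‖∫ y : Fin (n + 1 - 1) → ℝ, ‖H (y, s)‖‖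
        ≤ Set.indicator (Set.Ico (0 : ℝ) 1) (fun _ => M) s := by
    intro s
    by_cases hs : s ∈ Set.Ico (0 : ℝ) 1
    · rw [Set.indicator_of_mem hs]
      have h1s0 : (0 : ℝ) ≤ 1 - s := by linarith [hs.2]
      have h1s1 : (1 : ℝ) - s ≤ 1 := by linarith [hs.1]
      rw [hsliceNorm s hs]
      have hle : (∫ x in B, ‖(1 - s) * g x + s * f0‖) ≤ M := by
        apply setIntegral_mono_on (hgconstInt s).norm hMint hB
        intro x _
        calc ‖(1 - s) * g x + s * f0‖ ≤ ‖(1 - s) * g x‖ + ‖s * f0‖ := norm_add_le _ _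
          _ ≤ ‖g x‖ + |f0| := by
            rw [norm_mul, norm_mul, Real.norm_eq_abs, Real.norm_eq_abs,
              Real.norm_eq_abs, Real.norm_eq_abs, abs_of_nonneg h1s0,
              abs_of_nonneg hs.1]
            have h1 : (1 - s) * |g x| ≤ 1 * |g x| :=
              mul_le_mul_of_nonneg_right h1s1 (abs_nonneg _)
            have h2 : s * |f0| ≤ 1 * |f0| :=
              mul_le_mul_of_nonneg_right (by linarith [hs.2]) (abs_nonneg _)
            linarith [h1, h2]
      have hpow : (1 - s) ^ n ≤ 1 := pow_le_one₀ h1s0 h1s1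
      have hnn : 0 ≤ ∫ x in B, ‖(1 - s) * g x + s * f0‖ :=
        integral_nonneg fun x => norm_nonneg _
      rw [Real.norm_eq_abs, abs_of_nonneg (mul_nonneg (pow_nonneg h1s0 n) hnn)]
      nlinarith
    · have hz : ∀ y : Fin (n + 1 - 1) → ℝ, H (y, s) = 0 :=
        fun y => congrFun (hslice0 s hs) y
      simp [Set.indicator_of_notMem hs, hz]
  -- H is integrable on the product
  have hHint : Integrable H (volume.prod volume) := by
    have hHsm' : AEStronglyMeasurable H (volume.prod volume) := by
      rw [← Measure.volume_eq_prod]; exact hHsm.aestronglyMeasurable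
    refine (integrable_prod_iff' hHsm').2 ⟨?_, ?_⟩
    · exact Filter.Eventually.of_forall fun s => hsliceInt s
    · refine Integrable.mono'
        ((integrable_indicator_iff measurableSet_Ico).2
          (integrableOn_const (by simp [Real.volume_Ico])))
        (hHsm.norm.integral_prod_left').aestronglyMeasurable
        (Filter.Eventually.of_forall hbound)
  -- Fubini
  have hpart1 : (∫ z in C, f z)
      = I / ((n:ℝ) + 2) + (V * f0) / (((n:ℝ) + 1) * ((n:ℝ) + 2)) := by
    have hCC'sub : C' ⊆ C := by
      rw [hC, hC']
      exact Set.image_mono (Set.prod_mono_right Set.Ico_subset_Icc_self)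
    have hCdiff : C \ C' ⊆ {((0 : Fin (n + 1 - 1) → ℝ), (1 : ℝ))} := by
      rintro q ⟨hqC, hqC'⟩
      rw [hC] at hqC
      obtain ⟨⟨b, t⟩, ⟨hb, ht⟩, heq⟩ := hqC
      by_cases h : t < 1
      · exact absurd ⟨⟨b, t⟩, ⟨hb, ⟨ht.1, h⟩⟩, heq⟩ hqC'
      · have ht1 : t = 1 := le_antisymm ht.2 (not_lt.1 h)
        subst ht1
        rw [← heq]
        simp
    have hsingle : volume ({((0 : Fin (n + 1 - 1) → ℝ), (1 : ℝ))} :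
        Set ((Fin (n + 1 - 1) → ℝ) × ℝ)) = 0 := by
      have hss : ({((0 : Fin (n + 1 - 1) → ℝ), (1 : ℝ))} :
          Set ((Fin (n + 1 - 1) → ℝ) × ℝ))
          = ({(0 : Fin (n + 1 - 1) → ℝ)} : Set (Fin (n + 1 - 1) → ℝ)) ×ˢ
            ({(1 : ℝ)} : Set ℝ) := by
        rw [Set.singleton_prod_singleton]
      rw [hss, Measure.volume_eq_prod, Measure.prod_prod, Real.volume_singleton, mul_zero]
    have hae : C' =ᵐ[volume] C := by
      rw [MeasureTheory.ae_eq_set]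
      constructor
      · rw [Set.diff_eq_empty.2 hCC'sub]; exact measure_empty
      · exact measure_mono_null hCdiff hsingle
    calc (∫ z in C, f z) = ∫ z in C', f z := (setIntegral_congr_set hae).symm
      _ = ∫ z, C'.indicator f z := (integral_indicator hC'meas).symm
      _ = ∫ z, H z := integral_congr_ae hFH
      _ = ∫ z, H z ∂(volume.prod volume) := by rw [← Measure.volume_eq_prod]
      _ = ∫ s, ∫ y, H (y, s) := integral_prod_symm H hHint
      _ = ∫ s, Set.indicator (Set.Ico (0 : ℝ) 1)
            (fun s => (1 - s) ^ (n + 1) * I + s * (1 - s) ^ n * (V * f0)) s := by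
          apply integral_congr_ae
          apply Filter.Eventually.of_forall
          intro s
          by_cases hs : s ∈ Set.Ico (0 : ℝ) 1
          · rw [Set.indicator_of_mem hs]; exact hsliceVal s hs
          · have hz : ∀ y : Fin (n + 1 - 1) → ℝ, H (y, s) = 0 :=
              fun y => congrFun (hslice0 s hs) y
            simp [Set.indicator_of_notMem hs, hz]
      _ = ∫ s in Set.Ico (0 : ℝ) 1,
            ((1 - s) ^ (n + 1) * I + s * (1 - s) ^ n * (V * f0)) :=
          integral_indicator measurableSet_Ico
      _ = ∫ s in Set.Icc (0 : ℝ) 1,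
            ((1 - s) ^ (n + 1) * I + s * (1 - s) ^ n * (V * f0)) :=
          setIntegral_congr_set Ico_ae_eq_Icc
      _ = I / ((n:ℝ) + 2) + (V * f0) / (((n:ℝ) + 1) * ((n:ℝ) + 2)) :=
          cone_aux_one_dim n I (V * f0)
  exact ⟨hpart1.trans hRHS.symm, hpart2.trans hRHS.symm⟩
end
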